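/- With E_n(x;q) = Σ_{k=0}^n E_{n,k}(α,β,q) x^k where E_{n,k} satisfies E_{0,0}=1 and E_{n,k} = q^(β+k-1)[n-k+α]E_{n-1,k-1} + [k+β]E_{n-1,k}, one has, as an identity of formal power series in x over ℚ(q): E_n(x;q)/(x;q)_{n+α+β} = Σ_{j≥0} x^j · qbinom(j+α+β-1, j) · [j+β]^n, for all n ≥ 0 and positive integers α, β. -/

import Mathlib

/-!
Write `A_n(x) = ∑ₖ E_{n,k} xᵏ` (`ESeries`), `F_n(x)` (`carlitzSeries`) for the right-hand side and
`N = n + α + β`. The recurrence for `E_{n,k}` is equivalent to the functional equation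
`(1 - q) A_{n+1}(x) = (1 - qᴺ x) A_n(x) - q^β (1 - x) A_n(qx)`, and `(1 - q)[j+β] = 1 - q^(j+β)` gives
`(1 - q) F_{n+1}(x) = F_n(x) - q^β F_n(qx)`. Since `(1 - x)(qx;q)_N = (1 - qᴺ x)(x;q)_N`, the series
`A_n` and `(x;q)_N F_n` obey the same recursion in `n`; at `n = 0` they agree by the
`q`-binomial theorem `1/(x;q)_{M+1} = ∑ⱼ qbinom(M+j, j) xʲ` with `M + 1 = α + β`.
-/

open Finset

noncomputable section

abbrev K : Type := RatFunc ℚ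

def qq : K := RatFunc.X

def qint (m : ℕ) : K := ∑ i ∈ Finset.range m, qq ^ i

def qfact (m : ℕ) : K := ∏ i ∈ Finset.range m, qint (i + 1)

def qbinom (a b : ℕ) : K := qfact a / (qfact b * qfact (a - b))

def E (α β : ℕ) : ℕ → ℕ → K
  | 0, k => if k = 0 then 1 else 0
  | n + 1, 0 => qint β * E α β n 0
  | n + 1, k + 1 =>
      qq ^ (β + k) * qint (n - k + α) * E α β n k + qint (k + 1 + β) * E α β n (k + 1)

def poch (N : ℕ) : PowerSeries K :=
  ∏ i ∈ Finset.range N, (1 - PowerSeries.C (qq ^ i) * PowerSeries.X)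

open PowerSeries

lemma one_sub_qq_mul_qint (m : ℕ) : (1 - qq) * qint m = 1 - qq ^ m := by
  rw [qint, mul_comm, geom_sum_mul_neg]

lemma qq_pow_ne_one {m : ℕ} (hm : m ≠ 0) : qq ^ m ≠ 1 := by
  rw [qq, ← RatFunc.algebraMap_X, ← map_pow, ← map_one (algebraMap (Polynomial ℚ) K),
    (RatFunc.algebraMap_injective ℚ).ne_iff]
  intro h
  simpa [hm] using congrArg Polynomial.natDegree h

lemma one_sub_qq_ne_zero : (1 : K) - qq ≠ 0 :=
  sub_ne_zero.mpr (by simpa using (qq_pow_ne_one one_ne_zero).symm)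

lemma qint_ne_zero {m : ℕ} (hm : m ≠ 0) : qint m ≠ 0 := fun h =>
  qq_pow_ne_one hm (by linear_combination one_sub_qq_mul_qint m - (1 - qq) * h)

lemma qint_add (a b : ℕ) : qint (a + b) = qint a + qq ^ a * qint b := by
  simp only [qint, sum_range_add, mul_sum, pow_add]

lemma qfact_ne_zero (m : ℕ) : qfact m ≠ 0 :=
  prod_ne_zero_iff.mpr fun i _ => qint_ne_zero i.succ_ne_zero

lemma qfact_zero : qfact 0 = 1 :=
  prod_range_zero _

lemma qfact_succ (m : ℕ) : qfact (m + 1) = qfact m * qint (m + 1) :=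
  prod_range_succ _ _

lemma qbinom_add_right (a b : ℕ) : qbinom (a + b) b = qfact (a + b) / (qfact b * qfact a) := by
  rw [qbinom, Nat.add_sub_cancel]

lemma qbinom_zero_right (a : ℕ) : qbinom a 0 = 1 := by
  rw [qbinom, Nat.sub_zero, qfact_zero, one_mul, div_self (qfact_ne_zero a)]

lemma qbinom_self (a : ℕ) : qbinom a a = 1 := by
  rw [qbinom, Nat.sub_self, qfact_zero, mul_one, div_self (qfact_ne_zero a)]

lemma qbinom_succ_succ (N j : ℕ) :
    qbinom (N + 1 + (j + 1)) (j + 1) =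
      qbinom (N + (j + 1)) (j + 1) + qq ^ (N + 1) * qbinom (N + 1 + j) j := by
  rw [qbinom_add_right, qbinom_add_right, qbinom_add_right,
    show N + 1 + (j + 1) = N + j + 1 + 1 by omega, show N + (j + 1) = N + j + 1 by omega,
    show N + 1 + j = N + j + 1 by omega, qfact_succ (N + j + 1), qfact_succ j, qfact_succ N,
    show N + j + 1 + 1 = (N + 1) + (j + 1) by omega, qint_add (N + 1) (j + 1)]
  have := qint_ne_zero N.succ_ne_zero
  have := qint_ne_zero j.succ_ne_zero
  have := qfact_ne_zero N
  have := qfact_ne_zero j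
  field_simp

lemma coeff_zero_one_sub_C_mul_X_mul {R : Type*} [Ring R] (a : R) (f : PowerSeries R) :
    coeff 0 ((1 - C a * X) * f) = coeff 0 f := by
  simp [sub_mul, mul_assoc]

lemma coeff_succ_one_sub_C_mul_X_mul {R : Type*} [Ring R] (a : R) (f : PowerSeries R) (k : ℕ) :
    coeff (k + 1) ((1 - C a * X) * f) = coeff (k + 1) f - a * coeff k f := by
  rw [sub_mul, one_mul, mul_assoc, map_sub, coeff_C_mul, coeff_succ_X_mul]

lemma rescale_one_sub_C_mul_X {R : Type*} [CommRing R] (a b : R) :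
    rescale a (1 - C b * X) = 1 - C (a * b) * X := by
  ext (_ | _ | k) <;> simp only [coeff_rescale] <;> simp [coeff_C, coeff_one]

lemma poch_succ (N : ℕ) : poch (N + 1) = poch N * (1 - C (qq ^ N) * X) :=
  prod_range_succ _ _

lemma constantCoeff_poch (N : ℕ) : constantCoeff (poch N) = 1 := by
  simp [poch, map_prod]

lemma one_sub_X_mul_rescale_poch (N : ℕ) :
    (1 - X) * rescale qq (poch N) = (1 - C (qq ^ N) * X) * poch N := by
  induction N with
  | zero => simp [poch]
  | succ N ih =>
    rw [poch_succ, map_mul, rescale_one_sub_C_mul_X, ← pow_succ', ← mul_assoc, ih]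
    ring

def qbinomSeries (N : ℕ) : PowerSeries K := PowerSeries.mk fun j => qbinom (N + j) j

lemma one_sub_C_mul_X_mul_qbinomSeries (N : ℕ) :
    (1 - C (qq ^ (N + 1)) * X) * qbinomSeries (N + 1) = qbinomSeries N := by
  ext (_ | j)
  · simp only [coeff_zero_one_sub_C_mul_X_mul, qbinomSeries, coeff_mk, qbinom_zero_right]
  · rw [coeff_succ_one_sub_C_mul_X_mul]
    simp only [qbinomSeries, coeff_mk]
    rw [qbinom_succ_succ]
    ring

lemma poch_succ_mul_qbinomSeries (N : ℕ) : poch (N + 1) * qbinomSeries N = 1 := by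
  induction N with
  | zero =>
    have hseries : qbinomSeries 0 = PowerSeries.mk 1 := by ext j; simp [qbinomSeries, qbinom_self]
    rw [poch_succ, hseries, poch, prod_range_zero, one_mul, pow_zero, map_one, one_mul,
      mul_comm, mk_one_mul_one_sub_eq_one]
  | succ N ih =>
    rw [poch_succ, mul_assoc, one_sub_C_mul_X_mul_qbinomSeries, ih]

lemma E_eq_zero_of_lt (α β : ℕ) {n k : ℕ} (h : n < k) : E α β n k = 0 := by
  induction n generalizing k with
  | zero => obtain ⟨k, rfl⟩ := Nat.exists_eq_add_one.mpr h; simp [E]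
  | succ n ih =>
    obtain ⟨k, rfl⟩ := Nat.exists_eq_add_one.mpr (Nat.zero_lt_of_lt h)
    rw [E, ih (by omega), ih (by omega), mul_zero, mul_zero, add_zero]

def ESeries (α β n : ℕ) : PowerSeries K := PowerSeries.mk fun k => E α β n k

def carlitzSeries (α β n : ℕ) : PowerSeries K :=
  PowerSeries.mk fun j => qbinom (j + α + β - 1) j * qint (j + β) ^ n

lemma sum_range_C_E_mul_X_pow (α β n : ℕ) :
    ∑ k ∈ range (n + 1), C (E α β n k) * X ^ k = ESeries α β n := by
  ext j
  simp only [map_sum, coeff_C_mul_X_pow, sum_ite_eq, mem_range, ESeries, coeff_mk]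
  split_ifs with h
  · rfl
  · exact (E_eq_zero_of_lt α β (by omega)).symm

lemma C_one_sub_qq_mul_ESeries_succ (α β n : ℕ) :
    C (1 - qq) * ESeries α β (n + 1) =
      (1 - C (qq ^ (n + α + β)) * X) * ESeries α β n -
        C (qq ^ β) * ((1 - X) * rescale qq (ESeries α β n)) := by
  rw [show (1 - X : PowerSeries K) = 1 - C 1 * X by simp]
  ext (_ | k) <;> rw [coeff_C_mul, map_sub, coeff_C_mul] <;>
    simp only [coeff_zero_one_sub_C_mul_X_mul, coeff_succ_one_sub_C_mul_X_mul,
      coeff_rescale, ESeries, coeff_mk, E]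
  · linear_combination E α β n 0 * one_sub_qq_mul_qint β
  · -- the truncated subtraction `n - k` is harmless: for `n < k` it multiplies `E α β n k = 0`
    rcases le_or_gt k n with hk | hk
    · obtain ⟨d, rfl⟩ := Nat.exists_eq_add_of_le hk
      rw [Nat.add_sub_cancel_left]
      linear_combination qq ^ (β + k) * E α β (k + d) k * one_sub_qq_mul_qint (d + α) +
        E α β (k + d) (k + 1) * one_sub_qq_mul_qint (k + 1 + β)
    · rw [E_eq_zero_of_lt α β hk, E_eq_zero_of_lt α β (by omega)]
      ring

lemma C_one_sub_qq_mul_carlitzSeries_succ (α β n : ℕ) :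
    C (1 - qq) * carlitzSeries α β (n + 1) =
      carlitzSeries α β n - C (qq ^ β) * rescale qq (carlitzSeries α β n) := by
  ext j
  rw [coeff_C_mul, map_sub, coeff_C_mul]
  simp only [coeff_rescale, carlitzSeries, coeff_mk]
  linear_combination qbinom (j + α + β - 1) j * qint (j + β) ^ n * one_sub_qq_mul_qint (j + β)

lemma ESeries_eq_poch_mul_carlitzSeries {α β : ℕ} (hαβ : α + β ≠ 0) (n : ℕ) :
    ESeries α β n = poch (n + α + β) * carlitzSeries α β n := by
  induction n with
  | zero =>
    obtain ⟨N, hN⟩ := Nat.exists_eq_add_one.mpr (Nat.pos_of_ne_zero hαβ)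
    have hE : ESeries α β 0 = 1 := by ext (_ | j) <;> simp [ESeries, E, coeff_one]
    have hF : carlitzSeries α β 0 = qbinomSeries N := by
      ext j; simp [carlitzSeries, qbinomSeries, show j + α + β - 1 = N + j by omega]
    rw [hE, hF, zero_add, hN, poch_succ_mul_qbinomSeries]
  | succ n ih =>
    have hC : C (1 - qq) ≠ 0 := (map_ne_zero C).mpr one_sub_qq_ne_zero
    refine mul_left_cancel₀ hC ?_
    rw [C_one_sub_qq_mul_ESeries_succ, ih, map_mul, ← mul_assoc (1 - X),
      one_sub_X_mul_rescale_poch, show n + 1 + α + β = n + α + β + 1 by omega, poch_succ]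
    linear_combination (-(poch (n + α + β) * (1 - C (qq ^ (n + α + β)) * X))) *
      C_one_sub_qq_mul_carlitzSeries_succ α β n

theorem E_carlitz_identity_general (α β : ℕ) (hβ : 1 ≤ β) (n : ℕ) :
    (∑ k ∈ Finset.range (n + 1), PowerSeries.C (E α β n k) * PowerSeries.X ^ k) *
        (poch (n + α + β))⁻¹ =
      PowerSeries.mk (fun j => qbinom (j + α + β - 1) j * qint (j + β) ^ n) := by
  have hpoch : constantCoeff (poch (n + α + β)) ≠ 0 := by simp [constantCoeff_poch]
  rw [sum_range_C_E_mul_X_pow, ESeries_eq_poch_mul_carlitzSeries (by omega), mul_right_comm,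
    PowerSeries.mul_inv_cancel _ hpoch, one_mul, carlitzSeries]

theorem E_carlitz_identity (α β : ℕ) (hα : 1 ≤ α) (hβ : 1 ≤ β) (n : ℕ) :
    (∑ k ∈ Finset.range (n + 1), PowerSeries.C (E α β n k) * PowerSeries.X ^ k) *
        (poch (n + α + β))⁻¹ =
      PowerSeries.mk (fun j => qbinom (j + α + β - 1) j * qint (j + β) ^ n) :=
  E_carlitz_identity_general α β hβ n

end
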